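/- Let K be a field of characteristic 0, r, n, m ≥ 1 integers, u ≥ 0, and ζ₁,…,ζ_r ∈ K none of which is a non-positive rational integer; set γ₁ = ζ_r, …, γ_r = ζ₁. Regard α₁,…,α_m as indeterminates and consider the polynomial ring K[α₁,…,α_m][t_{i,s} : 1 ≤ i ≤ m, 0 ≤ s ≤ r−1]. Let C_{u,m} = Ψ(P̂_u) ∈ K[α₁,…,α_m], where Ψ and P̂_u are as in the context. Then C_{u,m} is homogeneous in α₁,…,α_m of degree m·[r(u+1) + r²n + C(r,2)] + C(m,2)·(2n+1)r², and is divisible by ∏_{i=1}^m α_i^{r(u+1) + r²n + C(r,2)} (where C(a,2) = a(a−1)/2). -/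

import Mathlib

/-!
`Ψ` sends each monomial to a multiple of a single monomial, in which the exponent of `α_i` is
`r` plus the degree of the original monomial in the `i`-th block of variables
`α_i, t_{i,0}, …, t_{i,r−1}`. Summing over the blocks, homogeneity of `Ψ(P̂_u)` reduces to
that of `P̂_u`, whose degree is `mr(u + mrn) + C(mr, 2)`.

For divisibility, `P̂_u` is a multiple of
`Q_i = ∏_s t_{i,s}^u (t_{i,s} − α_i)^{rn} · ∏_{s<s'} (t_{i,s'} − t_{i,s})`, which is
homogeneous of degree `ru + r²n + C(r, 2)` in the `i`-th block. Hence every monomial of `P̂_u`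
has at least that degree in the `i`-th block, and every monomial of `Ψ(P̂_u)` is divisible by
`α_i^{r(u+1) + r²n + C(r, 2)}`.
-/

/-- The polynomial `P̂_u` in the variables `α₁,…,α_m` (encoded `Sum.inl i`) and
`t_{i,s}` (encoded `Sum.inr (i,s)`, `1 ≤ i ≤ m`, `0 ≤ s ≤ r−1`):
`P̂_u = ∏_{i,s} [t_{i,s}^u ∏_j (t_{i,s}−α_j)^{rn}] · ∏_{(i₁,s₁)<(i₂,s₂)} (t_{i₂,s₂}−t_{i₁,s₁})`,
the last product being over pairs in lexicographic order. -/
noncomputable def PhatP (K : Type*) [Field K] (r n m u : ℕ) :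
    MvPolynomial (Fin m ⊕ Fin m × Fin r) K :=
  (∏ i : Fin m, ∏ s : Fin r,
      (MvPolynomial.X (Sum.inr (i, s)) ^ u *
        ∏ j : Fin m,
          (MvPolynomial.X (Sum.inr (i, s)) - MvPolynomial.X (Sum.inl j)) ^ (r * n))) *
  ∏ p : Fin m × Fin r, ∏ q ∈ Finset.univ.filter
      (fun q : Fin m × Fin r => p.1 < q.1 ∨ p.1 = q.1 ∧ p.2 < q.2),
    (MvPolynomial.X (Sum.inr q) - MvPolynomial.X (Sum.inr p))

open MvPolynomial Finset

namespace MvPolynomial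

section MapMonomial

variable {R σ τ : Type*} [CommSemiring R] {Ψ : MvPolynomial σ R →ₗ[R] MvPolynomial τ R}
  {c : (σ →₀ ℕ) → R} {g : (σ →₀ ℕ) → τ →₀ ℕ}

theorem eq_sum_monomial_of_map_monomial
    (hΨ : ∀ e, Ψ (monomial e 1) = c e • monomial (g e) 1) (p : MvPolynomial σ R) :
    Ψ p = ∑ e ∈ p.support, monomial (g e) (coeff e p * c e) := by
  conv_lhs => rw [p.as_sum]
  rw [map_sum]
  refine sum_congr rfl fun e _ => ?_
  have hsmul : monomial e (coeff e p) = coeff e p • monomial e (1 : R) := by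
    rw [smul_monomial, smul_eq_mul, mul_one]
  rw [hsmul, map_smul, hΨ, smul_smul, smul_monomial, smul_eq_mul, mul_one]

theorem isHomogeneous_of_map_monomial
    (hΨ : ∀ e, Ψ (monomial e 1) = c e • monomial (g e) 1) {p : MvPolynomial σ R} {d : ℕ}
    (hp : ∀ e ∈ p.support, (g e).degree = d) : (Ψ p).IsHomogeneous d := by
  rw [eq_sum_monomial_of_map_monomial hΨ]
  exact IsHomogeneous.sum _ _ _ fun e he => isHomogeneous_monomial _ (hp e he)

theorem dvd_of_map_monomial
    (hΨ : ∀ e, Ψ (monomial e 1) = c e • monomial (g e) 1) {p : MvPolynomial σ R}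
    {a : MvPolynomial τ R} (hp : ∀ e ∈ p.support, a ∣ monomial (g e) 1) : a ∣ Ψ p := by
  rw [eq_sum_monomial_of_map_monomial hΨ]
  exact dvd_sum fun e he =>
    (hp e he).trans (Dvd.intro_left (C _) (by rw [C_mul_monomial, mul_one]))

end MapMonomial

theorem IsWeightedHomogeneous.le_weight_of_dvd {R σ : Type*} [CommSemiring R] {w : σ → ℕ}
    {q p : MvPolynomial σ R} {k : ℕ} (hq : q.IsWeightedHomogeneous w k) (hqp : q ∣ p)
    {e : σ →₀ ℕ} (he : e ∈ p.support) : k ≤ Finsupp.weight w e := by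
  classical
  obtain ⟨h, rfl⟩ := hqp
  obtain ⟨a, ha, b, -, rfl⟩ := mem_add.mp (support_mul q h he)
  rw [map_add, hq (mem_support_iff.mp ha)]
  exact Nat.le_add_right _ _

theorem prod_X_pow_dvd_monomial {R σ : Type*} [CommSemiring R] [Fintype σ] {k : ℕ}
    {d : σ →₀ ℕ} (hd : ∀ i, k ≤ d i) : ∏ i, X i ^ k ∣ monomial d (1 : R) := by
  rw [monomial_eq, C_1, one_mul, Finsupp.prod_fintype _ _ (fun _ => pow_zero _)]
  exact prod_dvd_prod_of_dvd _ _ fun i _ => pow_dvd_pow _ (hd i)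

end MvPolynomial

theorem Fin.sum_card_Ioi (n : ℕ) : ∑ a : Fin n, #(Ioi a) = n * (n - 1) / 2 := by
  simp only [Fin.card_Ioi]
  rw [Fin.sum_univ_eq_sum_range (fun k => n - 1 - k), sum_range_reflect (fun k => k) n,
    sum_range_id]

theorem Fintype.sum_card_filter_lt (α : Type*) [Fintype α] [LinearOrder α] :
    ∑ a : α, #{b | a < b} = card α * (card α - 1) / 2 := by
  let f := Fintype.orderIsoFinOfCardEq α rfl
  rw [← Fin.sum_card_Ioi, ← f.toEquiv.sum_comp]
  refine Fintype.sum_congr _ _ fun a => ?_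
  rw [← filter_lt_eq_Ioi, ← Fintype.card_subtype, ← Fintype.card_subtype]
  exact (Fintype.card_congr (f.toEquiv.subtypeEquiv fun b => f.lt_iff_lt.symm)).symm

section Blocks

variable {m : ℕ}

def blockWeight {r : ℕ} (i : Fin m) : Fin m ⊕ Fin m × Fin r → ℕ :=
  Sum.elim (fun j => if j = i then 1 else 0) (fun q => if q.1 = i then 1 else 0)

theorem weight_blockWeight {r : ℕ} (i : Fin m) (e : Fin m ⊕ Fin m × Fin r →₀ ℕ) :
    Finsupp.weight (blockWeight i) e = e (Sum.inl i) + ∑ s, e (Sum.inr (i, s)) := by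
  simp [Finsupp.weight_eq_sum, Fintype.sum_sum_type, Fintype.sum_prod_type_right, blockWeight]

variable (R : Type*) [CommRing R] (r n u : ℕ)

noncomputable def blockFactor (i : Fin m) : MvPolynomial (Fin m ⊕ Fin m × Fin r) R :=
  (∏ s : Fin r, X (Sum.inr (i, s)) ^ u * (X (Sum.inr (i, s)) - X (Sum.inl i)) ^ (r * n)) *
    ∏ s : Fin r, ∏ s' ∈ Ioi s, (X (Sum.inr (i, s')) - X (Sum.inr (i, s)))

theorem isWeightedHomogeneous_blockFactor (i : Fin m) :
    (blockFactor R r n u i).IsWeightedHomogeneous (blockWeight i)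
      (r * u + r ^ 2 * n + r * (r - 1) / 2) := by
  have hα : (X (Sum.inl i) : MvPolynomial (Fin m ⊕ Fin m × Fin r) R).IsWeightedHomogeneous
      (blockWeight i) 1 := by
    simpa [blockWeight] using isWeightedHomogeneous_X R (blockWeight i) (Sum.inl i)
  have ht (s : Fin r) : (X (Sum.inr (i, s)) : MvPolynomial (Fin m ⊕ Fin m × Fin r) R)
      |>.IsWeightedHomogeneous (blockWeight i) 1 := by
    simpa [blockWeight] using isWeightedHomogeneous_X R (blockWeight i) (Sum.inr (i, s))
  have hdiag := IsWeightedHomogeneous.prod univ _ _ fun s _ =>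
    ((ht s).pow u).mul (((ht s).sub hα).pow (r * n))
  have hpairs := IsWeightedHomogeneous.prod univ _ _ fun s _ =>
    IsWeightedHomogeneous.prod (Ioi s) _ _ fun s' _ => (ht s').sub (ht s)
  rw [blockFactor]
  convert hdiag.mul hpairs using 1
  simp only [smul_eq_mul, mul_one, sum_const, card_univ, Fintype.card_fin, Fin.sum_card_Ioi]
  ring

end Blocks

section PhatP

variable (K : Type*) [Field K] (r n m u : ℕ)

theorem blockFactor_dvd_PhatP (i : Fin m) : blockFactor K r n u i ∣ PhatP K r n m u := by
  refine mul_dvd_mul ?_ ?_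
  · refine (prod_dvd_prod_of_dvd _ _ fun s _ => ?_).trans (dvd_prod_of_mem _ (mem_univ i))
    exact mul_dvd_mul_left _ (dvd_prod_of_mem _ (mem_univ i))
  · rw [Fintype.prod_prod_type]
    refine (prod_dvd_prod_of_dvd _ _ fun s _ => ?_).trans (dvd_prod_of_mem _ (mem_univ i))
    refine (prod_map (Ioi s) ⟨(i, ·), Prod.mk_right_injective i⟩
      fun q => (X (Sum.inr q) - X (Sum.inr (i, s)) : MvPolynomial _ K)).symm.dvd.trans
        (prod_dvd_prod_of_subset _ _ _ fun q hq => ?_)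
    obtain ⟨s', hs', rfl⟩ := mem_map.mp hq
    simpa using mem_Ioi.mp hs'

theorem le_blockWeight_of_mem_support_PhatP {e : Fin m ⊕ Fin m × Fin r →₀ ℕ}
    (he : e ∈ (PhatP K r n m u).support) (i : Fin m) :
    r * u + r ^ 2 * n + r * (r - 1) / 2 ≤ e (Sum.inl i) + ∑ s, e (Sum.inr (i, s)) :=
  weight_blockWeight i e ▸ (isWeightedHomogeneous_blockFactor K r n u i).le_weight_of_dvd
    (blockFactor_dvd_PhatP K r n m u i) he

theorem sum_card_lex_lt :
    ∑ p : Fin m × Fin r, #{q : Fin m × Fin r | p.1 < q.1 ∨ p.1 = q.1 ∧ p.2 < q.2} =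
      m * r * (m * r - 1) / 2 := by
  have h := Fintype.sum_card_filter_lt (Lex (Fin m × Fin r))
  rw [Fintype.card_lex, Fintype.card_prod, Fintype.card_fin, Fintype.card_fin] at h
  refine (Fintype.sum_equiv toLex _ _ fun p => ?_).trans h
  rw [← Fintype.card_subtype, ← Fintype.card_subtype]
  exact Fintype.card_congr (toLex.subtypeEquiv fun q => Prod.Lex.toLex_lt_toLex.symm)

theorem isHomogeneous_PhatP :
    (PhatP K r n m u).IsHomogeneous (m * r * (u + m * r * n) + m * r * (m * r - 1) / 2) := by
  have hX (v) : (X v : MvPolynomial (Fin m ⊕ Fin m × Fin r) K).IsHomogeneous 1 :=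
    isHomogeneous_X K v
  have hdiag := IsHomogeneous.prod univ _ _ fun (i : Fin m) _ =>
    IsHomogeneous.prod univ _ _ fun (s : Fin r) _ =>
      ((hX (Sum.inr (i, s))).pow u).mul (IsHomogeneous.prod univ _ _ fun j _ =>
        ((hX (Sum.inr (i, s))).sub (hX (Sum.inl j))).pow (r * n))
  have hpairs := IsHomogeneous.prod univ _ _ fun (p : Fin m × Fin r) _ =>
    IsHomogeneous.prod {q | p.1 < q.1 ∨ p.1 = q.1 ∧ p.2 < q.2} _ _ fun q _ =>
      (hX (Sum.inr q)).sub (hX (Sum.inr p))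
  rw [PhatP]
  convert hdiag.mul hpairs using 1
  simp only [one_mul, sum_const, card_univ, Fintype.card_fin, smul_eq_mul, mul_one,
    sum_card_lex_lt]
  ring

end PhatP

theorem degree_PhatP_add_mul_eq (r n m u : ℕ) :
    m * r * (u + m * r * n) + m * r * (m * r - 1) / 2 + m * r =
      m * (r * (u + 1) + r ^ 2 * n + r * (r - 1) / 2) +
        m * (m - 1) / 2 * ((2 * n + 1) * r ^ 2) := by
  simp only [← Nat.choose_two_right]
  apply Nat.cast_injective (R := ℚ)
  push_cast [Nat.cast_choose_two]
  ring

theorem statement11_general (K : Type*) [Field K]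
    (r n m : ℕ) (u : ℕ)
    (γ : ℕ → K)
    (Ψ : MvPolynomial (Fin m ⊕ Fin m × Fin r) K →ₗ[K] MvPolynomial (Fin m) K)
    (hΨ : ∀ e : (Fin m ⊕ Fin m × Fin r) →₀ ℕ,
      Ψ (MvPolynomial.monomial e 1) =
        (∏ i : Fin m, ∏ s : Fin r,
            (∏ w ∈ Finset.range ((s : ℕ) + 1),
              ((e (Sum.inr (i, s)) : K) + γ (r - (s : ℕ) + w)))⁻¹) •
          MvPolynomial.monomial
            (Finsupp.equivFunOnFinite.symm
              (fun i : Fin m => e (Sum.inl i) + (∑ s : Fin r, e (Sum.inr (i, s))) + r)) 1) :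
    (Ψ (PhatP K r n m u)).IsHomogeneous
        (m * (r * (u + 1) + r ^ 2 * n + r * (r - 1) / 2) +
          m * (m - 1) / 2 * ((2 * n + 1) * r ^ 2)) ∧
    (∏ i : Fin m, MvPolynomial.X i ^ (r * (u + 1) + r ^ 2 * n + r * (r - 1) / 2)) ∣
      Ψ (PhatP K r n m u) := by
  refine ⟨isHomogeneous_of_map_monomial hΨ fun e he => ?_,
    dvd_of_map_monomial hΨ fun e he => prod_X_pow_dvd_monomial fun i => ?_⟩
  · have hdeg : e.degree = _ :=
      ((isHomogeneous_PhatP K r n m u).degree_eq_sum_deg_support he).symm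
    rw [Finsupp.degree_eq_sum, Fintype.sum_sum_type, Fintype.sum_prod_type] at hdeg
    rw [Finsupp.degree_eq_sum]
    simp only [Finsupp.coe_equivFunOnFinite_symm, sum_add_distrib, hdeg, sum_const, card_univ,
      Fintype.card_fin, smul_eq_mul]
    exact degree_PhatP_add_mul_eq r n m u
  · have hblock := le_blockWeight_of_mem_support_PhatP K r n m u he i
    rw [Finsupp.coe_equivFunOnFinite_symm]
    linarith

/-- `C_{u,m} = Ψ(P̂_u)` is homogeneous in `α₁,…,α_m` of degree
`m[r(u+1) + r²n + r(r−1)/2] + (m(m−1)/2)(2n+1)r²` and is divisible by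
`∏_i α_i^{r(u+1)+r²n+r(r−1)/2}`.  The linear map `Ψ`, the composition of the commuting maps
`ψ̃_{α_i,i,s} : t_{i,s}^k ↦ α_i^{k+1}/∏_{w=0}^s (k+γ_{r−s+w})`, is characterized by its values
on monomials.  Here `γ₁ = ζ_r, …, γ_r = ζ₁`, no `ζ_j` being a non-positive integer. -/
theorem statement11 (K : Type*) [Field K] [CharZero K]
    (r n m : ℕ) (hr : 1 ≤ r) (hn : 1 ≤ n) (hm : 1 ≤ m) (u : ℕ)
    (ζ : ℕ → K) (hζ : ∀ j < r, ¬ ∃ z : ℤ, z ≤ 0 ∧ ζ j = (z : K))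
    (γ : ℕ → K) (hγ : ∀ w, 1 ≤ w → w ≤ r → γ w = ζ (r - w))
    (Ψ : MvPolynomial (Fin m ⊕ Fin m × Fin r) K →ₗ[K] MvPolynomial (Fin m) K)
    (hΨ : ∀ e : (Fin m ⊕ Fin m × Fin r) →₀ ℕ,
      Ψ (MvPolynomial.monomial e 1) =
        (∏ i : Fin m, ∏ s : Fin r,
            (∏ w ∈ Finset.range ((s : ℕ) + 1),
              ((e (Sum.inr (i, s)) : K) + γ (r - (s : ℕ) + w)))⁻¹) •
          MvPolynomial.monomial
            (Finsupp.equivFunOnFinite.symm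
              (fun i : Fin m => e (Sum.inl i) + (∑ s : Fin r, e (Sum.inr (i, s))) + r)) 1) :
    (Ψ (PhatP K r n m u)).IsHomogeneous
        (m * (r * (u + 1) + r ^ 2 * n + r * (r - 1) / 2) +
          m * (m - 1) / 2 * ((2 * n + 1) * r ^ 2)) ∧
    (∏ i : Fin m, MvPolynomial.X i ^ (r * (u + 1) + r ^ 2 * n + r * (r - 1) / 2)) ∣
      Ψ (PhatP K r n m u) :=
  statement11_general K r n m u γ Ψ hΨ
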